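/- Let g and g̃ be probability densities on an S_n-symmetric measurable Ω, with the symmetrization h̃ of g̃ non-zero a.e. If φ : Ω → [0,1] satisfies (1/n!) Σ_{π∈S_n} (g̃(πx)/h̃(x)) φ(πx) = α a.e., then |∫_Ω g φ dμ − α| ≤ ∫_Ω |g − g̃| dμ; i.e., the bias of the test defined from the approximate density is bounded by the L¹-distance between g and g̃. -/

import Mathlib

/-!
Averaging over the permutations preserves Lebesgue measure on the symmetric set `Ω`, so
`∫ g̃ φ = ∫ (1/n!) Σ_π g̃(πx) φ(πx) dx = ∫ h̃ α = α ∫ g̃ = α`: the test built from `g̃` has level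
exactly `α` under `g̃`. Since `0 ≤ φ ≤ 1`, replacing `g̃` by `g` moves `∫ · φ` by at most
`∫ |g - g̃|`.
-/

open MeasureTheory

/-- The action of a permutation `π` on vectors: `(π • x) k = x (π k)`. -/
def permAct {n : ℕ} (π : Equiv.Perm (Fin n)) (x : Fin n → ℝ) : Fin n → ℝ := x ∘ π

/-- The symmetrization of `g`. -/
noncomputable def symmetrize {n : ℕ} (g : (Fin n → ℝ) → ℝ) (x : Fin n → ℝ) : ℝ :=
  (1 / (n.factorial : ℝ)) * ∑ π : Equiv.Perm (Fin n), g (permAct π x)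

section AverageOverMaps

variable {α ι E : Type*} [MeasurableSpace α] {μ : Measure α} [Fintype ι]
  [NormedAddCommGroup E] [NormedSpace ℝ E] {T : ι → α → α}

theorem integral_sum_comp (hT : ∀ i, MeasurePreserving (T i) μ μ)
    (hTe : ∀ i, MeasurableEmbedding (T i)) {f : α → E} (hf : Integrable f μ) :
    ∫ x, ∑ i, f (T i x) ∂μ = Fintype.card ι • ∫ x, f x ∂μ := by
  have hcomp (i : ι) : Integrable (fun x => f (T i x)) μ :=
    ((hT i).integrable_comp_emb (hTe i)).2 hf
  rw [integral_finsetSum _ fun i _ => hcomp i]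
  simp only [fun i => (hT i).integral_comp (hTe i) f, Finset.sum_const, Finset.card_univ]

theorem integral_mul_eq_of_sum_comp_mul_eq [Nonempty ι] (hT : ∀ i, MeasurePreserving (T i) μ μ)
    (hTe : ∀ i, MeasurableEmbedding (T i)) {f φ : α → ℝ} {c : ℝ} (hf : Integrable f μ)
    (hfφ : Integrable (fun x => f x * φ x) μ)
    (h : ∀ᵐ x ∂μ, ∑ i, f (T i x) * φ (T i x) = c * ∑ i, f (T i x)) :
    ∫ x, f x * φ x ∂μ = c * ∫ x, f x ∂μ := by
  have hsum := integral_sum_comp hT hTe hfφ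
  rw [integral_congr_ae h, integral_const_mul, integral_sum_comp hT hTe hf, nsmul_eq_mul,
    nsmul_eq_mul, mul_left_comm] at hsum
  exact (mul_left_cancel₀ (Nat.cast_ne_zero.2 Fintype.card_ne_zero) hsum).symm

end AverageOverMaps

theorem abs_integral_mul_sub_integral_mul_le {α : Type*} [MeasurableSpace α] {μ : Measure α}
    {f g φ : α → ℝ} (hf : Integrable f μ) (hg : Integrable g μ)
    (hφ : AEStronglyMeasurable φ μ) (hφ_le : ∀ᵐ x ∂μ, |φ x| ≤ 1) :
    |(∫ x, f x * φ x ∂μ) - ∫ x, g x * φ x ∂μ| ≤ ∫ x, |f x - g x| ∂μ := by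
  rw [← integral_sub (hf.mul_bdd hφ hφ_le) (hg.mul_bdd hφ hφ_le)]
  calc |∫ x, f x * φ x - g x * φ x ∂μ| ≤ ∫ x, |f x * φ x - g x * φ x| ∂μ :=
        abs_integral_le_integral_abs
    _ ≤ ∫ x, |f x - g x| ∂μ := by
        refine integral_mono_of_nonneg (.of_forall fun x => abs_nonneg _) (hf.sub hg).abs ?_
        filter_upwards [hφ_le] with x hx
        rw [← sub_mul, abs_mul]
        exact mul_le_of_le_one_right (abs_nonneg _) hx

section Permutations

variable {n : ℕ}

theorem permAct_eq_piCongrLeft (π : Equiv.Perm (Fin n)) :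
    permAct π = ⇑(MeasurableEquiv.piCongrLeft (fun _ : Fin n => ℝ) π.symm) := by
  funext x j
  simpa [permAct] using
    (MeasurableEquiv.piCongrLeft_apply_apply (β := fun _ : Fin n => ℝ) π.symm x (π j)).symm

theorem measurableEmbedding_permAct (π : Equiv.Perm (Fin n)) :
    MeasurableEmbedding (permAct π) := by
  rw [permAct_eq_piCongrLeft]
  exact MeasurableEquiv.measurableEmbedding _

theorem measurePreserving_permAct (π : Equiv.Perm (Fin n)) :
    MeasurePreserving (permAct π) volume volume := by
  rw [permAct_eq_piCongrLeft]
  exact volume_measurePreserving_piCongrLeft (fun _ : Fin n => ℝ) π.symm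

theorem preimage_permAct_eq {Ω : Set (Fin n → ℝ)}
    (hΩ : ∀ (π : Equiv.Perm (Fin n)) (x : Fin n → ℝ), x ∈ Ω → permAct π x ∈ Ω)
    (π : Equiv.Perm (Fin n)) : permAct π ⁻¹' Ω = Ω := by
  refine Set.Subset.antisymm (fun x hx => ?_) (fun x => hΩ π x)
  simpa [permAct, Function.comp_def] using hΩ π⁻¹ _ hx

theorem measurePreserving_permAct_restrict {Ω : Set (Fin n → ℝ)}
    (hΩ : ∀ (π : Equiv.Perm (Fin n)) (x : Fin n → ℝ), x ∈ Ω → permAct π x ∈ Ω)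
    (π : Equiv.Perm (Fin n)) :
    MeasurePreserving (permAct π) (volume.restrict Ω) (volume.restrict Ω) := by
  simpa only [preimage_permAct_eq hΩ π] using
    (measurePreserving_permAct π).restrict_preimage_emb (measurableEmbedding_permAct π) Ω

theorem sum_mul_eq_of_symmetrize_ne_zero {g φ : (Fin n → ℝ) → ℝ} {x : Fin n → ℝ} {c : ℝ}
    (hx : symmetrize g x ≠ 0)
    (h : (1 / (n.factorial : ℝ)) *
      ∑ π : Equiv.Perm (Fin n), (g (permAct π x) / symmetrize g x) * φ (permAct π x) = c) :
    ∑ π : Equiv.Perm (Fin n), g (permAct π x) * φ (permAct π x) =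
      c * ∑ π : Equiv.Perm (Fin n), g (permAct π x) := by
  have hN : (n.factorial : ℝ) ≠ 0 := Nat.cast_ne_zero.2 n.factorial_ne_zero
  have hx' : ∑ π : Equiv.Perm (Fin n), g (permAct π x) ≠ 0 := by
    simpa [symmetrize, hN] using hx
  rw [← h]
  simp only [symmetrize, div_mul_eq_mul_div, ← Finset.sum_div]
  field_simp

end Permutations

theorem stmt_11_general {n : ℕ} (Ω : Set (Fin n → ℝ))
    (hΩsym : ∀ (π : Equiv.Perm (Fin n)) (x : Fin n → ℝ), x ∈ Ω → permAct π x ∈ Ω)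
    (g gt : (Fin n → ℝ) → ℝ)
    (hgint : IntegrableOn g Ω volume)
    (hgtint : IntegrableOn gt Ω volume) (hgtdens : ∫ x in Ω, gt x = 1)
    (hne : ∀ᵐ x ∂(volume.restrict Ω), symmetrize gt x ≠ 0)
    (α : ℝ) (φ : (Fin n → ℝ) → ℝ) (hφmeas : Measurable φ)
    (hφ01 : ∀ x, φ x ∈ Set.Icc (0 : ℝ) 1)
    (hgperm : ∀ᵐ x ∂(volume.restrict Ω),
      (1 / (n.factorial : ℝ)) *
        ∑ π : Equiv.Perm (Fin n), (gt (permAct π x) / symmetrize gt x) * φ (permAct π x) = α) :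
    |(∫ x in Ω, g x * φ x) - α| ≤ ∫ x in Ω, |g x - gt x| := by
  have hφ_le : ∀ᵐ x ∂(volume.restrict Ω), |φ x| ≤ 1 :=
    .of_forall fun x => abs_le.2 ⟨by linarith [(hφ01 x).1], (hφ01 x).2⟩
  have hlevel : ∫ x in Ω, gt x * φ x = α := by
    rw [integral_mul_eq_of_sum_comp_mul_eq (measurePreserving_permAct_restrict hΩsym)
      measurableEmbedding_permAct hgtint (hgtint.mul_bdd hφmeas.aestronglyMeasurable hφ_le)
      (by filter_upwards [hne, hgperm] with x hx hα
          exact sum_mul_eq_of_symmetrize_ne_zero hx hα), hgtdens, mul_one]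
  rw [← hlevel]
  exact abs_integral_mul_sub_integral_mul_le hgint hgtint hφmeas.aestronglyMeasurable hφ_le

/-- The bias of a generalized permutation test constructed from an approximate density `g̃`
is bounded by the `L¹`-distance between `g` and `g̃`. -/
theorem stmt_11 {n : ℕ} (Ω : Set (Fin n → ℝ)) (hΩmeas : MeasurableSet Ω)
    (hΩsym : ∀ (π : Equiv.Perm (Fin n)) (x : Fin n → ℝ), x ∈ Ω → permAct π x ∈ Ω)
    (g gt : (Fin n → ℝ) → ℝ)
    (hgmeas : Measurable g) (hgpos : ∀ x, 0 ≤ g x)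
    (hgint : IntegrableOn g Ω volume) (hgdens : ∫ x in Ω, g x = 1)
    (hgtmeas : Measurable gt) (hgtpos : ∀ x, 0 ≤ gt x)
    (hgtint : IntegrableOn gt Ω volume) (hgtdens : ∫ x in Ω, gt x = 1)
    (hne : ∀ᵐ x ∂(volume.restrict Ω), symmetrize gt x ≠ 0)
    (α : ℝ) (φ : (Fin n → ℝ) → ℝ) (hφmeas : Measurable φ)
    (hφ01 : ∀ x, φ x ∈ Set.Icc (0 : ℝ) 1)
    (hgperm : ∀ᵐ x ∂(volume.restrict Ω),
      (1 / (n.factorial : ℝ)) *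
        ∑ π : Equiv.Perm (Fin n), (gt (permAct π x) / symmetrize gt x) * φ (permAct π x) = α) :
    |(∫ x in Ω, g x * φ x) - α| ≤ ∫ x in Ω, |g x - gt x| :=
  stmt_11_general Ω hΩsym g gt hgint hgtint hgtdens hne α φ hφmeas hφ01 hgperm
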